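/- Let p ≥ 2 be an integer and β > β*(p), and for each n let X = (X_1,…,X_n) be distributed according to the p-tensor Curie-Weiss model P_{β,p} on {−1,1}^n. Then the maximum pseudolikelihood estimator η_p(X̄_n) converges in probability to β as n → ∞; that is, for every ε > 0, P_{β,p}(|η_p(X̄_n) − β| > ε) → 0. -/

import Mathlib

/-
For `β > β*(p)` the function `H = H_{β,p}` has a positive maximum on `[-1, 1]`. Since `H(0) = 0`
and `H' = β p x^{p-1} - arctanh x` tends to `∓∞` at `±1`, every maximiser `m` is interior and
nonzero, and `H'(m) = 0` says exactly `η_p(m) = β`. As `η_p` is continuous there, `H` stays below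
`max H` by a margin on the compact closure of the bad set `{x : |η_p(x) - β| > ε}`.

Grouping configurations by the number `k` of `+1` spins, i.e. by the magnetisation
`x = 2k/n - 1`, the entropy bounds `e^{n h(k/n)} / (n+1) ≤ C(n, k) ≤ e^{n h(k/n)}` and
`I(x) = log 2 - h((1+x)/2)` show that level `k` carries total weight `e^{n (log 2 + H(x))}` up
to a factor `n + 1`. Comparing the bad levels with a level close to a maximiser gives
`P(|η_p(X̄_n) - β| > ε) ≤ (n+1)² e^{-cn}`.
-/

open Real Set Filter

/-- `I(x) = ½[(1+x)log(1+x) + (1−x)log(1−x)]` (with `Real.log 0 = 0`). -/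
noncomputable def bahI (x : ℝ) : ℝ :=
  ((1 + x) * Real.log (1 + x) + (1 - x) * Real.log (1 - x)) / 2

/-- `H_{β,p}(x) = β xᵖ − I(x)`. -/
noncomputable def bahH (β : ℝ) (p : ℕ) (x : ℝ) : ℝ := β * x ^ p - bahI x

/-- `β*(p) = sup {β ≥ 0 : sup_{x∈[−1,1]} H_{β,p}(x) = 0}`. -/
noncomputable def betaStar (p : ℕ) : ℝ :=
  sSup {β : ℝ | 0 ≤ β ∧ sSup (bahH β p '' Set.Icc (-1 : ℝ) 1) = 0}

/-- inverse hyperbolic tangent. -/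
noncomputable def arctanh (x : ℝ) : ℝ := Real.log ((1 + x) / (1 - x)) / 2

/-- `η_p(t) = p⁻¹ t^{1−p} arctanh t` for `t ≠ 0`, and `η_p(0) = 0`. -/
noncomputable def etaFn (p : ℕ) (t : ℝ) : ℝ :=
  if t = 0 then 0 else (p : ℝ)⁻¹ * t ^ (1 - (p : ℤ)) * arctanh t

/-- The spin value of a Boolean coordinate: `true ↦ 1`, `false ↦ −1`. -/
noncomputable def spin (b : Bool) : ℝ := if b then 1 else -1

/-- The average magnetization `X̄ = n⁻¹ Σᵢ Xᵢ` of a configuration in `{−1,1}ⁿ`. -/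
noncomputable def mag {n : ℕ} (σ : Fin n → Bool) : ℝ := (∑ i, spin (σ i)) / n

/-- The unnormalized Curie–Weiss weight `exp(β n^{1−p} (Σᵢ xᵢ)ᵖ)` of a configuration. -/
noncomputable def cwWeight (β : ℝ) (p n : ℕ) (σ : Fin n → Bool) : ℝ :=
  Real.exp (β * (n : ℝ) ^ (1 - (p : ℤ)) * (∑ i, spin (σ i)) ^ p)

/-- The probability of the event `E` under the `p`-tensor Curie–Weiss model `P_{β,p}`
on `{−1,1}ⁿ` (the normalizations `2ⁿ Z_n(β,p)` cancel in this ratio). -/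
noncomputable def cwProb (β : ℝ) (p n : ℕ) (E : Set (Fin n → Bool)) : ℝ :=
  (∑ σ : Fin n → Bool, E.indicator (cwWeight β p n) σ)
    / ∑ σ : Fin n → Bool, cwWeight β p n σ

open Topology

-- `k` is a mode of `Bin(n, k/n)`: compare the terms `k + d` and `k` through
-- `C(n, k+d) C(k+d, k) = C(n, k) C(n-k, d)`, `d! C(n-k, d) ≤ (n-k)^d` and `k^d ≤ d! C(k+d, k)`.
theorem Nat.choose_mul_pow_mul_pow_le_of_le {n j k : ℕ} (hkj : k ≤ j) (hjn : j ≤ n) :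
    n.choose j * k ^ j * (n - k) ^ (n - j) ≤ n.choose k * k ^ k * (n - k) ^ (n - k) := by
  obtain ⟨d, rfl⟩ := Nat.exists_eq_add_of_le hkj
  suffices h : n.choose (k + d) * k ^ d ≤ n.choose k * (n - k) ^ d by
    have hsplit : n - k = (n - (k + d)) + d := by omega
    calc n.choose (k + d) * k ^ (k + d) * (n - k) ^ (n - (k + d))
        = n.choose (k + d) * k ^ d * (k ^ k * (n - k) ^ (n - (k + d))) := by ring
      _ ≤ n.choose k * (n - k) ^ d * (k ^ k * (n - k) ^ (n - (k + d))) := by gcongr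
      _ = n.choose k * k ^ k * (n - k) ^ (n - k) := by rw [hsplit, pow_add]; ring
  have hpos : 0 < (k + d).choose k * d.factorial :=
    Nat.mul_pos (Nat.choose_pos (Nat.le_add_right k d)) d.factorial_pos
  have hchoose : n.choose (k + d) * (k + d).choose k = n.choose k * (n - k).choose d := by
    simpa using Nat.choose_mul (n := n) (Nat.le_add_right k d)
  have hdesc : (k + d).descFactorial d = d.factorial * (k + d).choose k := by
    rw [Nat.descFactorial_eq_factorial_mul_choose, Nat.choose_symm_add]
  have hlow : k ^ d ≤ (k + d).descFactorial d :=
    le_trans (Nat.pow_le_pow_left (by omega) d) (Nat.pow_sub_le_descFactorial (k + d) d)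
  have hup : (n - k).choose d * d.factorial ≤ (n - k) ^ d := by
    rw [mul_comm, ← Nat.descFactorial_eq_factorial_mul_choose]
    exact Nat.descFactorial_le_pow _ _
  refine Nat.le_of_mul_le_mul_right ?_ hpos
  calc n.choose (k + d) * k ^ d * ((k + d).choose k * d.factorial)
      = n.choose (k + d) * (k + d).choose k * (d.factorial * k ^ d) := by ring
    _ = n.choose k * ((n - k).choose d * d.factorial) * k ^ d := by rw [hchoose]; ring
    _ ≤ n.choose k * (n - k) ^ d * (k + d).descFactorial d := by gcongr
    _ = n.choose k * (n - k) ^ d * ((k + d).choose k * d.factorial) := by rw [hdesc]; ring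

theorem Nat.choose_mul_pow_mul_pow_le {n j k : ℕ} (hj : j ≤ n) (hk : k ≤ n) :
    n.choose j * k ^ j * (n - k) ^ (n - j) ≤ n.choose k * k ^ k * (n - k) ^ (n - k) := by
  rcases le_total k j with hkj | hjk
  · exact Nat.choose_mul_pow_mul_pow_le_of_le hkj hj
  · have h := Nat.choose_mul_pow_mul_pow_le_of_le (n := n) (Nat.sub_le_sub_left hjk n)
      (Nat.sub_le n j)
    rw [Nat.sub_sub_self hk, Nat.sub_sub_self hj, Nat.choose_symm hj, Nat.choose_symm hk] at h
    linarith

theorem choose_mul_pow_mul_one_sub_pow_eq_div {n j k : ℕ} (hn : n ≠ 0) (hj : j ≤ n)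
    (hk : k ≤ n) :
    (n.choose j : ℝ) * (k / n) ^ j * (1 - k / n) ^ (n - j)
      = (n.choose j * k ^ j * (n - k) ^ (n - j) : ℕ) / (n : ℝ) ^ n := by
  have hn' : (n : ℝ) ≠ 0 := Nat.cast_ne_zero.mpr hn
  rw [eq_div_iff (pow_ne_zero n hn'), ← Nat.sub_add_cancel hj, pow_add]
  push_cast [Nat.cast_sub hk, Nat.sub_add_cancel hj]
  rw [one_sub_div hn', div_pow, div_pow]
  field_simp

theorem pow_mul_one_sub_pow_eq_exp_neg_binEntropy {n k : ℕ} (hk : k ≤ n) :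
    ((k : ℝ) / n) ^ k * (1 - k / n) ^ (n - k) = exp (-(n * binEntropy (k / n))) := by
  rcases Nat.eq_zero_or_pos k with rfl | hk0
  · simp
  rcases hk.eq_or_lt with rfl | hkn
  · simp [hk0.ne']
  have hn : (0 : ℝ) < n := by exact_mod_cast hk0.trans hkn
  have hq : (0 : ℝ) < k / n := by positivity
  have hq' : (0 : ℝ) < 1 - k / n := by
    rw [sub_pos, div_lt_one hn]; exact_mod_cast hkn
  have hnk : ((n - k : ℕ) : ℝ) = n * (1 - k / n) := by
    push_cast [Nat.cast_sub hk]; field_simp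
  rw [← exp_log (pow_pos hq k), ← exp_log (pow_pos hq' (n - k)), ← exp_add, log_pow, log_pow,
    hnk, binEntropy, log_inv, log_inv]
  congr 1
  field_simp
  ring

theorem choose_mul_pow_mul_one_sub_pow_le_one {n k : ℕ} (hk : k ≤ n) {q : ℝ} (hq₀ : 0 ≤ q)
    (hq₁ : q ≤ 1) : (n.choose k : ℝ) * q ^ k * (1 - q) ^ (n - k) ≤ 1 := by
  have hq : 0 ≤ 1 - q := sub_nonneg.mpr hq₁
  calc (n.choose k : ℝ) * q ^ k * (1 - q) ^ (n - k)
      = q ^ k * (1 - q) ^ (n - k) * n.choose k := by ring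
    _ ≤ ∑ j ∈ Finset.range (n + 1), q ^ j * (1 - q) ^ (n - j) * n.choose j :=
        Finset.single_le_sum (f := fun j => q ^ j * (1 - q) ^ (n - j) * n.choose j)
          (fun j _ => by positivity) (Finset.mem_range.mpr (Nat.lt_succ_of_le hk))
    _ = 1 := by rw [← add_pow]; simp

theorem choose_le_exp_binEntropy {n k : ℕ} (hk : k ≤ n) :
    (n.choose k : ℝ) ≤ exp (n * binEntropy (k / n)) := by
  have h := choose_mul_pow_mul_one_sub_pow_le_one hk (q := k / n) (by positivity)
    (div_le_one_of_le₀ (by exact_mod_cast hk) n.cast_nonneg)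
  rwa [mul_assoc, pow_mul_one_sub_pow_eq_exp_neg_binEntropy hk, exp_neg, ← div_eq_mul_inv,
    div_le_one (exp_pos _)] at h

theorem choose_mul_pow_mul_one_sub_pow_le {n j k : ℕ} (hj : j ≤ n) (hk : k ≤ n) :
    (n.choose j : ℝ) * (k / n) ^ j * (1 - k / n) ^ (n - j)
      ≤ (n.choose k : ℝ) * (k / n) ^ k * (1 - k / n) ^ (n - k) := by
  rcases eq_or_ne n 0 with rfl | hn
  · obtain rfl : j = 0 := by omega
    obtain rfl : k = 0 := by omega
    rfl
  rw [choose_mul_pow_mul_one_sub_pow_eq_div hn hj hk,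
    choose_mul_pow_mul_one_sub_pow_eq_div hn hk hk]
  gcongr ?_ / _
  exact_mod_cast Nat.choose_mul_pow_mul_pow_le hj hk

theorem exp_binEntropy_le_succ_mul_choose {n k : ℕ} (hk : k ≤ n) :
    exp (n * binEntropy (k / n)) ≤ (n + 1) * n.choose k := by
  set q : ℝ := k / n
  have h : 1 ≤ (n + 1) * ((n.choose k : ℝ) * q ^ k * (1 - q) ^ (n - k)) :=
    calc (1 : ℝ) = (q + (1 - q)) ^ n := by simp
      _ = ∑ j ∈ Finset.range (n + 1), (n.choose j : ℝ) * q ^ j * (1 - q) ^ (n - j) := by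
        rw [add_pow]; exact Finset.sum_congr rfl fun j _ => by ring
      _ ≤ ∑ _j ∈ Finset.range (n + 1), (n.choose k : ℝ) * q ^ k * (1 - q) ^ (n - k) :=
        Finset.sum_le_sum fun j hj =>
          choose_mul_pow_mul_one_sub_pow_le (Nat.lt_succ_iff.mp (Finset.mem_range.mp hj)) hk
      _ = _ := by simp
  rwa [mul_assoc (n.choose k : ℝ), pow_mul_one_sub_pow_eq_exp_neg_binEntropy hk, exp_neg,
    ← mul_assoc, ← div_eq_mul_inv, one_le_div (exp_pos _)] at h

theorem IsCompact.exists_forall_ge' {α β : Type*} [LinearOrder α] [TopologicalSpace α]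
    [ClosedIciTopology α] [NoMinOrder α] [TopologicalSpace β] {f : β → α} {s : Set β}
    (hs : IsCompact s) (hf : ContinuousOn f s) {a : α} (hf' : ∀ b ∈ s, f b < a) :
    ∃ a', a' < a ∧ ∀ b ∈ s, f b ≤ a' :=
  IsCompact.exists_forall_le' (α := αᵒᵈ) hs hf hf'

theorem bahI_eq_log_two_sub_binEntropy (x : ℝ) :
    bahI x = log 2 - binEntropy ((1 + x) / 2) := by
  have hmul : ∀ y : ℝ, y * log y = y * log 2 + y * log (y / 2) := fun y => by
    rcases eq_or_ne y 0 with rfl | hy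
    · simp
    · rw [log_div hy two_ne_zero]; ring
  rw [bahI, hmul (1 + x), hmul (1 - x), binEntropy, log_inv, log_inv,
    show 1 - (1 + x) / 2 = (1 - x) / 2 by ring]
  ring

theorem continuous_bahI : Continuous bahI := by
  simp_rw [funext bahI_eq_log_two_sub_binEntropy]
  fun_prop

theorem bahI_nonneg (x : ℝ) : 0 ≤ bahI x := by
  rw [bahI_eq_log_two_sub_binEntropy, sub_nonneg]
  exact binEntropy_le_log_two

theorem bahI_zero : bahI 0 = 0 := by simp [bahI]

theorem bahI_neg (x : ℝ) : bahI (-x) = bahI x := by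
  simp only [bahI, sub_neg_eq_add, ← sub_eq_add_neg]; ring

theorem continuous_bahH (β : ℝ) (p : ℕ) : Continuous (bahH β p) := by
  unfold bahH; have := continuous_bahI; fun_prop

theorem bahH_zero (β : ℝ) {p : ℕ} (hp : p ≠ 0) : bahH β p 0 = 0 := by
  simp [bahH, bahI_zero, zero_pow hp]

theorem bahH_one (β : ℝ) (p : ℕ) : bahH β p 1 = β - log 2 := by
  norm_num [bahH, bahI]

theorem bahH_neg (β : ℝ) (p : ℕ) (x : ℝ) : bahH β p (-x) = bahH ((-1) ^ p * β) p x := by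
  rw [bahH, bahH, bahI_neg, neg_pow]; ring

theorem log_two_add_bahH_two_mul_sub_one (β : ℝ) (p : ℕ) (q : ℝ) :
    log 2 + bahH β p (2 * q - 1) = binEntropy q + β * (2 * q - 1) ^ p := by
  rw [bahH, bahI_eq_log_two_sub_binEntropy, show (1 + (2 * q - 1)) / 2 = q by ring]; ring

theorem arctanh_eq_log_sub_log (x : ℝ) (h₁ : -1 < x) (h₂ : x < 1) :
    arctanh x = (log (1 + x) - log (1 - x)) / 2 := by
  rw [arctanh, log_div (by linarith) (by linarith)]

theorem le_arctanh_of_one_sub_le_exp {x K : ℝ} (h₀ : 0 ≤ x) (h₁ : x < 1) (hK : 1 - x ≤ exp (-(2 * K))) :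
    K ≤ arctanh x := by
  have h1 : log (1 - x) ≤ -(2 * K) := by
    rw [← log_exp (-(2 * K))]; exact log_le_log (by linarith) hK
  have h2 : 0 ≤ log (1 + x) := log_nonneg (by linarith)
  rw [arctanh_eq_log_sub_log x (by linarith) h₁]; linarith

theorem hasDerivAt_bahH (β : ℝ) (p : ℕ) {x : ℝ} (h₁ : -1 < x) (h₂ : x < 1) :
    HasDerivAt (bahH β p) (β * p * x ^ (p - 1) - arctanh x) x := by
  have hplus : HasDerivAt (fun y : ℝ => (1 + y) * log (1 + y)) ((log (1 + x) + 1) * 1) x :=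
    (hasDerivAt_mul_log (by linarith)).comp x ((hasDerivAt_id x).const_add 1)
  have hminus : HasDerivAt (fun y : ℝ => (1 - y) * log (1 - y)) ((log (1 - x) + 1) * (-1)) x :=
    (hasDerivAt_mul_log (by linarith)).comp x ((hasDerivAt_id x).const_sub 1)
  refine (((hasDerivAt_pow p x).const_mul β).sub ((hplus.add hminus).div_const 2)).congr_deriv ?_
  rw [arctanh_eq_log_sub_log x h₁ h₂]; ring

theorem exists_bahH_one_lt (β : ℝ) (p : ℕ) :
    ∃ x ∈ Icc (-1 : ℝ) 1, bahH β p 1 < bahH β p x := by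
  set K := |β| * p + 1
  obtain ⟨x₀, hx₀, hx₀₁, hK⟩ :
      ∃ x₀ : ℝ, 0 ≤ x₀ ∧ x₀ < 1 ∧ 1 - x₀ ≤ exp (-(2 * K)) :=
    ⟨max 0 (1 - exp (-(2 * K))), le_max_left _ _,
      max_lt one_pos (by linarith [exp_pos (-(2 * K))]),
      by linarith [le_max_right 0 (1 - exp (-(2 * K)))]⟩
  obtain ⟨c, ⟨hc₀, hc₁⟩, hslope⟩ := exists_hasDerivAt_eq_slope (bahH β p) _ hx₀₁
    (continuous_bahH β p).continuousOn
    (fun x hx => hasDerivAt_bahH β p (by linarith [hx.1]) hx.2)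
  have hc : 0 ≤ c := by linarith
  have hpow : β * p * c ^ (p - 1) ≤ |β| * p := by
    calc β * p * c ^ (p - 1) ≤ |β * p * c ^ (p - 1)| := le_abs_self _
      _ ≤ |β| * p := by
        rw [abs_mul, abs_mul, Nat.abs_cast, abs_pow, abs_of_nonneg hc]
        exact mul_le_of_le_one_right (by positivity) (pow_le_one₀ hc hc₁.le)
  have harctanh : K ≤ arctanh c := le_arctanh_of_one_sub_le_exp hc hc₁ (by linarith)
  have hneg : (bahH β p 1 - bahH β p x₀) / (1 - x₀) < 0 := by rw [← hslope]; linarith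
  rw [div_lt_iff₀ (by linarith), zero_mul] at hneg
  exact ⟨x₀, ⟨by linarith, hx₀₁.le⟩, by linarith⟩

theorem mem_Ioo_of_isMaxOn_bahH {β : ℝ} {p : ℕ} {m : ℝ} (hm : m ∈ Icc (-1 : ℝ) 1)
    (hmax : IsMaxOn (bahH β p) (Icc (-1) 1) m) : m ∈ Ioo (-1 : ℝ) 1 := by
  refine ⟨hm.1.lt_of_ne ?_, hm.2.lt_of_ne ?_⟩
  · rintro rfl
    obtain ⟨x, hx, hlt⟩ := exists_bahH_one_lt ((-1) ^ p * β) p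
    rw [← bahH_neg, ← bahH_neg] at hlt
    exact (hmax ⟨by linarith [hx.2], by linarith [hx.1]⟩).not_gt hlt
  · rintro rfl
    obtain ⟨x, hx, hlt⟩ := exists_bahH_one_lt β p
    exact (hmax hx).not_gt hlt

theorem etaFn_eq_of_isMaxOn_bahH {β : ℝ} {p : ℕ} (hp : p ≠ 0) {m : ℝ}
    (hm : m ∈ Icc (-1 : ℝ) 1) (hmax : IsMaxOn (bahH β p) (Icc (-1) 1) m) (hm₀ : m ≠ 0) : etaFn p m = β := by
  obtain ⟨h₁, h₂⟩ := mem_Ioo_of_isMaxOn_bahH hm hmax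
  have hcrit : β * p * m ^ (p - 1) - arctanh m = 0 :=
    (hmax.isLocalMax (Icc_mem_nhds h₁ h₂)).hasDerivAt_eq_zero (hasDerivAt_bahH β p h₁ h₂)
  have hpow : m ^ (1 - (p : ℤ)) * m ^ (p - 1) = 1 := by
    rw [← zpow_natCast, ← zpow_add₀ hm₀, Nat.cast_sub (Nat.one_le_iff_ne_zero.mpr hp)]
    simp
  rw [etaFn, if_neg hm₀, ← sub_eq_zero.mp hcrit]
  calc _ = β * ((p : ℝ)⁻¹ * p) * (m ^ (1 - (p : ℤ)) * m ^ (p - 1)) := by ring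
    _ = β := by rw [hpow, inv_mul_cancel₀ (Nat.cast_ne_zero.mpr hp)]; ring

theorem continuousAt_etaFn (p : ℕ) {x : ℝ} (hx₀ : x ≠ 0) (hx : x ∈ Ioo (-1 : ℝ) 1) :
    ContinuousAt (etaFn p) x := by
  have harctanh : ContinuousAt arctanh x := by
    have h₁ : 1 + x ≠ 0 := by linarith [hx.1]
    have h₂ : 1 - x ≠ 0 := by linarith [hx.2]
    unfold arctanh
    fun_prop (disch := first | assumption | exact div_ne_zero h₁ h₂)
  have h : ContinuousAt (fun t : ℝ => (p : ℝ)⁻¹ * t ^ (1 - (p : ℤ)) * arctanh t) x :=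
    (continuousAt_const.mul (continuousAt_zpow₀ x _ (Or.inl hx₀))).mul harctanh
  refine h.congr (eventually_ne_nhds hx₀ |>.mono fun t ht => ?_)
  simp only [etaFn, if_neg ht]

theorem exists_isMaxOn_bahH (β : ℝ) (p : ℕ) :
    ∃ m ∈ Icc (-1 : ℝ) 1, IsMaxOn (bahH β p) (Icc (-1) 1) m :=
  isCompact_Icc.exists_isMaxOn (nonempty_Icc.mpr (by norm_num)) (continuous_bahH β p).continuousOn

theorem sSup_image_bahH {β : ℝ} {p : ℕ} {m : ℝ} (hm : m ∈ Icc (-1 : ℝ) 1)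
    (hmax : IsMaxOn (bahH β p) (Icc (-1) 1) m) :
    sSup (bahH β p '' Icc (-1) 1) = bahH β p m :=
  IsGreatest.csSup_eq ⟨mem_image_of_mem _ hm, forall_mem_image.mpr hmax⟩

theorem exists_isMaxOn_bahH_pos {β : ℝ} {p : ℕ} (hp : p ≠ 0) (hβ : betaStar p < β) :
    ∃ m ∈ Icc (-1 : ℝ) 1, IsMaxOn (bahH β p) (Icc (-1) 1) m ∧ 0 < bahH β p m := by
  set T := {γ : ℝ | 0 ≤ γ ∧ sSup (bahH γ p '' Icc (-1 : ℝ) 1) = 0}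
  have hT : BddAbove T := by
    refine ⟨log 2, fun γ ⟨_, hγ⟩ => ?_⟩
    obtain ⟨m, hm, hmax⟩ := exists_isMaxOn_bahH γ p
    have h1 : bahH γ p 1 ≤ bahH γ p m := hmax (right_mem_Icc.mpr (by norm_num))
    rw [sSup_image_bahH hm hmax] at hγ
    rw [bahH_one, hγ] at h1
    linarith
  have h0 : (0 : ℝ) ∈ T := by
    refine ⟨le_rfl, ?_⟩
    obtain ⟨m, hm, hmax⟩ := exists_isMaxOn_bahH 0 p
    rw [sSup_image_bahH hm hmax]
    have h : bahH 0 p 0 ≤ bahH 0 p m := hmax ⟨by norm_num, by norm_num⟩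
    simp only [bahH, zero_mul, zero_sub, bahI_zero] at h ⊢
    linarith [bahI_nonneg m]
  obtain ⟨m, hm, hmax⟩ := exists_isMaxOn_bahH β p
  have h0m : bahH β p 0 ≤ bahH β p m := hmax ⟨by norm_num, by norm_num⟩
  rw [bahH_zero β hp] at h0m
  refine ⟨m, hm, hmax, h0m.lt_of_ne fun h => ?_⟩
  have hβT : β ∈ T :=
    ⟨(le_csSup hT h0).trans hβ.le, by rw [sSup_image_bahH hm hmax, ← h]⟩
  exact (le_csSup hT hβT).not_gt hβ

theorem exists_bahH_le_lt_of_betaStar_lt {β : ℝ} {p : ℕ} (hp : p ≠ 0) (hβ : betaStar p < β)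
    {ε : ℝ} (hε : 0 < ε) :
    ∃ m ∈ Icc (-1 : ℝ) 1, ∃ S < bahH β p m,
      ∀ x ∈ Icc (-1 : ℝ) 1, ε < |etaFn p x - β| → bahH β p x ≤ S := by
  obtain ⟨m, hm, hmax, hpos⟩ := exists_isMaxOn_bahH_pos hp hβ
  set B := {x ∈ Icc (-1 : ℝ) 1 | ε < |etaFn p x - β|}
  have hB : closure B ⊆ Icc (-1) 1 := closure_minimal (fun x hx => hx.1) isClosed_Icc
  have hlt : ∀ x ∈ closure B, bahH β p x < bahH β p m := by
    intro x hx
    refine (hmax (hB hx)).lt_of_ne fun hxm => ?_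
    have hxmax : IsMaxOn (bahH β p) (Icc (-1) 1) x := fun y hy => (hmax hy).trans hxm.ge
    have hx₀ : x ≠ 0 := by rintro rfl; rw [bahH_zero β hp] at hxm; exact hpos.ne hxm
    have hη := etaFn_eq_of_isMaxOn_bahH hp (hB hx) hxmax hx₀
    have hnear : ∀ᶠ t in 𝓝 x, |etaFn p t - β| < ε := by
      have := (continuousAt_etaFn p hx₀ (mem_Ioo_of_isMaxOn_bahH (hB hx) hxmax)).tendsto
      rw [hη] at this
      exact this.eventually (Metric.ball_mem_nhds β hε) |>.mono fun t ht => ht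
    obtain ⟨t, hnear, htB⟩ := (hnear.and_frequently (mem_closure_iff_frequently.mp hx)).exists
    exact htB.2.not_gt hnear
  obtain ⟨S, hS, hle⟩ := (isCompact_Icc.of_isClosed_subset isClosed_closure hB
    ).exists_forall_ge' (continuous_bahH β p).continuousOn hlt
  exact ⟨m, hm, S, hS, fun x hx hxε => hle x (subset_closure ⟨hx, hxε⟩)⟩

theorem sum_spin {n : ℕ} (σ : Fin n → Bool) :
    ∑ i, spin (σ i) = 2 * (Finset.univ.filter (fun i => σ i = true)).card - n := by
  have h : ∀ b, spin b = 2 * (if b = true then 1 else 0) - 1 := by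
    intro b; cases b <;> norm_num [spin]
  rw [Finset.sum_congr rfl fun i _ => h (σ i), Finset.sum_sub_distrib, ← Finset.mul_sum,
    Finset.sum_boole]
  simp

theorem mag_eq {n : ℕ} (hn : n ≠ 0) (σ : Fin n → Bool) :
    mag σ = 2 * ((Finset.univ.filter (fun i => σ i = true)).card / n) - 1 := by
  rw [mag, sum_spin]
  field_simp

theorem sum_comp_mag {n : ℕ} (hn : n ≠ 0) (F : ℝ → ℝ) :
    ∑ σ : Fin n → Bool, F (mag σ)
      = ∑ k ∈ Finset.range (n + 1), n.choose k * F (2 * (k / n) - 1) := by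
  let e : (Fin n → Bool) ≃ Finset (Fin n) :=
    { toFun σ := Finset.univ.filter (fun i => σ i = true)
      invFun s i := decide (i ∈ s)
      left_inv σ := by ext i; simp
      right_inv s := by ext i; simp }
  rw [Fintype.sum_equiv e _ (fun s => F (2 * (s.card / n) - 1)) (fun σ => by rw [mag_eq hn]; rfl),
    ← Finset.powerset_univ, Finset.sum_powerset_apply_card (fun k : ℕ => F (2 * (k / n) - 1))]
  simp

theorem cwWeight_eq {β : ℝ} {p n : ℕ} (hn : n ≠ 0) (σ : Fin n → Bool) :
    cwWeight β p n σ = exp (n * (β * mag σ ^ p)) := by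
  have hn' : (n : ℝ) ≠ 0 := Nat.cast_ne_zero.mpr hn
  have hsum : ∑ i, spin (σ i) = n * mag σ := by rw [mag]; field_simp
  have hpow : (n : ℝ) ^ (1 - (p : ℤ)) * (n : ℝ) ^ p = n := by
    rw [← zpow_natCast, ← zpow_add₀ hn']; simp
  rw [cwWeight, hsum, mul_pow]
  congr 1
  linear_combination β * mag σ ^ p * hpow

theorem choose_mul_exp_le (β : ℝ) (p : ℕ) {n k : ℕ} (hk : k ≤ n) :
    n.choose k * exp (n * (β * (2 * (k / n) - 1) ^ p))
      ≤ exp (n * (log 2 + bahH β p (2 * (k / n) - 1))) := by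
  rw [log_two_add_bahH_two_mul_sub_one, mul_add, exp_add]
  gcongr
  exact choose_le_exp_binEntropy hk

theorem exp_le_succ_mul_choose_mul_exp (β : ℝ) (p : ℕ) {n k : ℕ} (hk : k ≤ n) :
    exp (n * (log 2 + bahH β p (2 * (k / n) - 1)))
      ≤ (n + 1) * (n.choose k * exp (n * (β * (2 * (k / n) - 1) ^ p))) := by
  rw [log_two_add_bahH_two_mul_sub_one, mul_add, exp_add, ← mul_assoc ((n : ℝ) + 1)]
  exact mul_le_mul_of_nonneg_right (exp_binEntropy_le_succ_mul_choose hk) (exp_pos _).le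

theorem two_mul_div_sub_one_mem_Icc {n k : ℕ} (hk : k ≤ n) :
    2 * ((k : ℝ) / n) - 1 ∈ Icc (-1 : ℝ) 1 := by
  have h₀ : (0 : ℝ) ≤ k / n := by positivity
  have h₁ : (k : ℝ) / n ≤ 1 := div_le_one_of_le₀ (by exact_mod_cast hk) (Nat.cast_nonneg n)
  constructor <;> linarith

theorem cwProb_nonneg (β : ℝ) (p n : ℕ) (E : Set (Fin n → Bool)) : 0 ≤ cwProb β p n E :=
  div_nonneg (Finset.sum_nonneg fun _ _ => indicator_nonneg (fun _ _ => (exp_pos _).le) _)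
    (Finset.sum_nonneg fun _ _ => (exp_pos _).le)

theorem cwProb_mag_preimage_le {β : ℝ} {p n k : ℕ} (hn : n ≠ 0) (hk : k ≤ n) {A : Set ℝ}
    {S : ℝ} (hS : ∀ x ∈ Icc (-1 : ℝ) 1, x ∈ A → bahH β p x ≤ S) :
    cwProb β p n (mag ⁻¹' A)
      ≤ (n + 1) ^ 2 * exp (n * (S - bahH β p (2 * (k / n) - 1))) := by
  set g : ℝ → ℝ := fun x => exp (n * (β * x ^ p))
  have hw : cwWeight β p n = g ∘ mag := funext (cwWeight_eq hn)
  have hnum : ∑ σ, (mag ⁻¹' A).indicator (cwWeight β p n) σ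
      ≤ (n + 1) * exp (n * (log 2 + S)) := by
    simp_rw [hw, indicator_comp_right]
    rw [sum_comp_mag hn]
    calc ∑ j ∈ Finset.range (n + 1), (n.choose j : ℝ) * A.indicator g (2 * (j / n) - 1)
        ≤ ∑ _j ∈ Finset.range (n + 1), exp (n * (log 2 + S)) := by
          refine Finset.sum_le_sum fun j hj => ?_
          have hjn := Nat.lt_succ_iff.mp (Finset.mem_range.mp hj)
          by_cases hA : 2 * ((j : ℝ) / n) - 1 ∈ A
          · rw [indicator_of_mem hA]
            refine (choose_mul_exp_le β p hjn).trans ?_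
            gcongr
            exact hS _ (two_mul_div_sub_one_mem_Icc hjn) hA
          · rw [indicator_of_notMem hA, mul_zero]; positivity
      _ = (n + 1) * exp (n * (log 2 + S)) := by simp
  have hden : exp (n * (log 2 + bahH β p (2 * (k / n) - 1))) / (n + 1)
      ≤ ∑ σ, cwWeight β p n σ := by
    simp only [hw, Function.comp_apply]
    rw [sum_comp_mag hn g, div_le_iff₀' (by positivity)]
    refine (exp_le_succ_mul_choose_mul_exp β p hk).trans ?_
    gcongr
    exact Finset.single_le_sum (f := fun j => (n.choose j : ℝ) * g (2 * (j / n) - 1))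
      (fun j _ => by positivity) (Finset.mem_range.mpr (Nat.lt_succ_of_le hk))
  calc cwProb β p n (mag ⁻¹' A)
      ≤ (n + 1) * exp (n * (log 2 + S))
          / (exp (n * (log 2 + bahH β p (2 * (k / n) - 1))) / (n + 1)) :=
        div_le_div₀ (by positivity) hnum (by positivity) hden
    _ = (n + 1) ^ 2 * exp (n * (S - bahH β p (2 * (k / n) - 1))) := by
        rw [show (n : ℝ) * (S - bahH β p (2 * (k / n) - 1))
            = n * (log 2 + S) - n * (log 2 + bahH β p (2 * (k / n) - 1)) by ring, exp_sub]
        field_simp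

theorem tendsto_succ_sq_mul_exp_neg_mul {c : ℝ} (hc : 0 < c) :
    Tendsto (fun n : ℕ => ((n : ℝ) + 1) ^ 2 * exp (-(c * n))) atTop (𝓝 0) := by
  have hr : |exp (-c)| < 1 := by
    rw [abs_of_pos (exp_pos _), exp_lt_one_iff, neg_lt_zero]; exact hc
  have h := ((tendsto_add_atTop_iff_nat 1).mpr
    (tendsto_pow_const_mul_const_pow_of_abs_lt_one 2 hr)).const_mul (exp (-c))⁻¹
  rw [mul_zero] at h
  refine h.congr fun n => ?_
  rw [show -(c * n) = n * -c by ring, exp_nat_mul, Nat.cast_succ]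
  field_simp
  ring

theorem exists_tendsto_two_mul_div_sub_one {m : ℝ} (hm : m ∈ Icc (-1 : ℝ) 1) :
    ∃ k : ℕ → ℕ, (∀ n, k n ≤ n) ∧
      Tendsto (fun n : ℕ => 2 * ((k n : ℝ) / n) - 1) atTop (𝓝 m) := by
  have ha₀ : 0 ≤ (1 + m) / 2 := by linarith [hm.1]
  refine ⟨fun n => ⌊(1 + m) / 2 * n⌋₊, fun n => Nat.floor_le_of_le ?_, ?_⟩
  · exact mul_le_of_le_one_left n.cast_nonneg (by linarith [hm.2])
  · have h := (((tendsto_nat_floor_mul_div_atTop ha₀).comp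
      tendsto_natCast_atTop_atTop).const_mul 2).sub_const 1
    rwa [show 2 * ((1 + m) / 2) - 1 = m by ring] at h

/-- For `p ≥ 2` and `β > β*(p)`, the MPL estimator `η_p(X̄_n)` is consistent under the
`p`-tensor Curie–Weiss model `P_{β,p}`: for every `ε > 0`,
`P_{β,p}(|η_p(X̄_n) − β| > ε) → 0` as `n → ∞`. -/
theorem statement17 (p : ℕ) (hp : 2 ≤ p) (β : ℝ) (hβ : betaStar p < β) :
    ∀ ε > (0 : ℝ),
      Tendsto (fun n : ℕ =>
          cwProb β p n {σ : Fin n → Bool | ε < |etaFn p (mag σ) - β|})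
        atTop (nhds 0) := by
  intro ε hε
  obtain ⟨m, hm, S, hSm, hS⟩ := exists_bahH_le_lt_of_betaStar_lt (by omega) hβ hε
  obtain ⟨k, hk, hgrid⟩ := exists_tendsto_two_mul_div_sub_one hm
  obtain ⟨c, hc, hcS⟩ : ∃ c > 0, S + c < bahH β p m :=
    ⟨(bahH β p m - S) / 2, by linarith, by linarith⟩
  have hH : ∀ᶠ n : ℕ in atTop, S + c < bahH β p (2 * ((k n : ℝ) / n) - 1) :=
    ((continuous_bahH β p).tendsto m).comp hgrid |>.eventually (eventually_gt_nhds hcS)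
  refine squeeze_zero' (Eventually.of_forall fun n => cwProb_nonneg β p n _) ?_
    (tendsto_succ_sq_mul_exp_neg_mul hc)
  filter_upwards [hH, eventually_ne_atTop 0] with n hHn hn
  refine (cwProb_mag_preimage_le (A := {x | ε < |etaFn p x - β|}) hn (hk n) hS).trans ?_
  gcongr
  nlinarith [(n.cast_nonneg : (0 : ℝ) ≤ n)]
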